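/- arXiv:1409.4501 — 2 statements merged into one kernel-verified Lean document; each statement's English description precedes it below -/
import Mathlib

section
/- Let X ≥ 1 and 0 < r < s be real parameters. Suppose (a_k)_{k=1}^n is a finite non-increasing sequence of non-negative reals satisfying ∑_k a_k^s ≥ 1 and ∑_k a_k^r ≤ X. Then there exists an integer R with 1 ≤ R ≤ C(r,s)·X^{s/(s-r)} such that ∑_{k ≤ R} a_k^r ≥ c(r,s)·R^{(s-r)/(2s)}, where C(r,s) and c(r,s) are positive constants depending only on r and s. -/
/-!
Writing `b = a ^ r` and `t = s / r > 1` reduces everything to `r = 1`. Since `b` is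
non-increasing, `k * b k ≤ ∑_{j ≤ k} b j ≤ X`, so past `K ≈ X ^ (t / (t - 1))` every
`b k ≤ X / K` and the tail carries `t`-energy at most `(X / K) ^ (t - 1) * X ≤ 1 / 2`.
If all partial sums up to `K` stayed below `c * R ^ ((t - 1) / (2 * t))`, the same inequality
would give `b k ^ t ≤ c ^ t * k ^ (-(t + 1) / 2)`, a summable bound, so for small `c` the
energy up to `K` would be below `1 / 2` too.
-/

open Finset

theorem natCast_mul_le_sum_Icc_of_antitoneOn {f : ℕ → ℝ} (hf : AntitoneOn f (Set.Ici 1))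
    (k : ℕ) : (k : ℝ) * f k ≤ ∑ j ∈ Icc 1 k, f j := by
  calc (k : ℝ) * f k = ∑ _j ∈ Icc 1 k, f k := by simp
    _ ≤ ∑ j ∈ Icc 1 k, f j := sum_le_sum fun j hj => by
        obtain ⟨h1j, hjk⟩ := mem_Icc.mp hj
        exact hf (Set.mem_Ici.mpr h1j) (Set.mem_Ici.mpr (h1j.trans hjk)) hjk

theorem rpow_le_rpow_sub_one_mul_of_le {x M t : ℝ} (hx : 0 ≤ x) (hxM : x ≤ M) (ht : 1 ≤ t) :
    x ^ t ≤ M ^ (t - 1) * x := by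
  calc x ^ t = x ^ (t - 1) * x ^ (1 : ℝ) := by
        rw [← Real.rpow_add' hx (by linarith)]; ring_nf
    _ ≤ M ^ (t - 1) * x := by
        rw [Real.rpow_one]
        gcongr

theorem sum_Icc_le_sum_Icc_add_sum_filter_lt {f : ℕ → ℝ} (hf : ∀ k, 0 ≤ f k) (n K : ℕ) :
    ∑ k ∈ Icc 1 n, f k ≤ ∑ k ∈ Icc 1 K, f k + ∑ k ∈ Icc 1 n with K < k, f k := by
  rw [← sum_filter_add_sum_filter_not (Icc 1 n) (K < ·), add_comm]
  refine add_le_add_left (sum_le_sum_of_subset_of_nonneg (fun k hk => ?_) fun k _ _ => hf k) _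
  simp only [mem_filter, mem_Icc, not_lt] at hk ⊢
  omega

theorem sum_filter_lt_rpow_le {b : ℕ → ℝ} (hb0 : ∀ k, 0 ≤ b k) (hb : AntitoneOn b (Set.Ici 1))
    {n K : ℕ} (hK : 0 < K) {X t : ℝ} (hX : ∑ k ∈ Icc 1 n, b k ≤ X) (ht : 1 ≤ t) :
    ∑ k ∈ Icc 1 n with K < k, b k ^ t ≤ X ^ t / (K : ℝ) ^ (t - 1) := by
  have hK' : (0 : ℝ) < K := by exact_mod_cast hK
  have hX0 : 0 ≤ X := (sum_nonneg fun k _ => hb0 k).trans hX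
  have hbX : ∀ k ∈ Icc 1 n, K < k → b k ≤ X / K := fun k hk hKk => by
    rw [le_div_iff₀' hK']
    calc (K : ℝ) * b k ≤ k * b k := by gcongr; exact hb0 k
      _ ≤ ∑ j ∈ Icc 1 k, b j := natCast_mul_le_sum_Icc_of_antitoneOn hb k
      _ ≤ ∑ j ∈ Icc 1 n, b j := sum_le_sum_of_subset_of_nonneg
          (Icc_subset_Icc_right (mem_Icc.mp hk).2) fun j _ _ => hb0 j
      _ ≤ X := hX
  calc ∑ k ∈ Icc 1 n with K < k, b k ^ t
      ≤ ∑ k ∈ Icc 1 n with K < k, (X / K) ^ (t - 1) * b k :=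
        sum_le_sum fun k hk => rpow_le_rpow_sub_one_mul_of_le (hb0 k)
          (hbX k (mem_filter.mp hk).1 (mem_filter.mp hk).2) ht
    _ = (X / K) ^ (t - 1) * ∑ k ∈ Icc 1 n with K < k, b k := (mul_sum _ _ _).symm
    _ ≤ (X / K) ^ (t - 1) * X := by
        gcongr
        exact (sum_le_sum_of_subset_of_nonneg (filter_subset _ _) fun j _ _ => hb0 j).trans hX
    _ = X ^ t / (K : ℝ) ^ (t - 1) := by
        rw [Real.div_rpow hX0 hK'.le, div_mul_eq_mul_div, ← Real.rpow_add_one' hX0 (by linarith)]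
        ring_nf

theorem sum_Icc_rpow_le_of_sum_Icc_le {b : ℕ → ℝ} (hb0 : ∀ k, 0 ≤ b k)
    (hb : AntitoneOn b (Set.Ici 1)) {c γ t : ℝ} (hc : 0 ≤ c) (ht : 0 ≤ t) {K : ℕ}
    (hsmall : ∀ k ∈ Icc 1 K, ∑ j ∈ Icc 1 k, b j ≤ c * (k : ℝ) ^ γ) :
    ∑ k ∈ Icc 1 K, b k ^ t ≤ c ^ t * ∑ k ∈ Icc 1 K, (k : ℝ) ^ ((γ - 1) * t) := by
  rw [mul_sum]
  refine sum_le_sum fun k hkK => ?_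
  have hk : (0 : ℝ) < k := by exact_mod_cast (mem_Icc.mp hkK).1
  have hbk : b k ≤ c * (k : ℝ) ^ (γ - 1) := by
    rw [Real.rpow_sub_one hk.ne', ← mul_div_assoc, le_div_iff₀' hk]
    exact (natCast_mul_le_sum_Icc_of_antitoneOn hb k).trans (hsmall k hkK)
  calc b k ^ t ≤ (c * (k : ℝ) ^ (γ - 1)) ^ t := by gcongr; exact hb0 k
    _ = c ^ t * (k : ℝ) ^ ((γ - 1) * t) := by
        rw [Real.mul_rpow hc (by positivity), Real.rpow_mul hk.le]

theorem exists_nat_two_mul_rpow_le_rpow_sub_one {X t : ℝ} (hX : 1 ≤ X) (ht : 1 < t) :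
    ∃ K : ℕ, 0 < K ∧ (K : ℝ) ≤ (2 ^ (1 / (t - 1)) + 1) * X ^ (t / (t - 1)) ∧
      2 * X ^ t ≤ (K : ℝ) ^ (t - 1) := by
  have ht' : 0 < t - 1 := by linarith
  set y : ℝ := 2 ^ (1 / (t - 1)) * X ^ (t / (t - 1))
  have hy1 : 1 ≤ y := one_le_mul_of_one_le_of_one_le
    (Real.one_le_rpow one_le_two (by positivity)) (Real.one_le_rpow hX (by positivity))
  have hy : y ^ (t - 1) = 2 * X ^ t := by
    rw [Real.mul_rpow (by positivity) (by positivity), ← Real.rpow_mul zero_le_two,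
      ← Real.rpow_mul (by linarith), div_mul_cancel₀ _ ht'.ne', div_mul_cancel₀ _ ht'.ne',
      Real.rpow_one]
  refine ⟨⌈y⌉₊, Nat.ceil_pos.mpr (by linarith), ?_, ?_⟩
  · have hXe : 1 ≤ X ^ (t / (t - 1)) := Real.one_le_rpow hX (by positivity)
    linarith [Nat.ceil_lt_add_one (zero_le_one.trans hy1)]
  · rw [← hy]
    gcongr
    exact Nat.le_ceil y

theorem exists_sum_Icc_ge_rpow_of_one_le_sum_rpow {t : ℝ} (ht : 1 < t) :
    ∃ C c : ℝ, 0 < C ∧ 0 < c ∧ ∀ X : ℝ, 1 ≤ X → ∀ (n : ℕ) (b : ℕ → ℝ),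
      (∀ k, 0 ≤ b k) → AntitoneOn b (Set.Ici 1) →
      1 ≤ ∑ k ∈ Icc 1 n, b k ^ t → ∑ k ∈ Icc 1 n, b k ≤ X →
      ∃ R : ℕ, 1 ≤ R ∧ (R : ℝ) ≤ C * X ^ (t / (t - 1)) ∧
        c * (R : ℝ) ^ ((t - 1) / (2 * t)) ≤ ∑ k ∈ Icc 1 R, b k := by
  set γ := (t - 1) / (2 * t)
  have hexp : (γ - 1) * t < -1 := by
    have : (γ - 1) * t = -((t + 1) / 2) := by simp only [γ]; field_simp; ring
    linarith
  have hsum := Real.summable_nat_rpow.mpr hexp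
  set Z := ∑' k : ℕ, (k : ℝ) ^ ((γ - 1) * t)
  have hZ : 0 < Z := zero_lt_one.trans_le <| by
    simpa using hsum.le_tsum 1 fun k _ => Real.rpow_nonneg k.cast_nonneg _
  refine ⟨2 ^ (1 / (t - 1)) + 1, (4 * Z)⁻¹ ^ (1 / t), by positivity, by positivity, ?_⟩
  intro X hX n b hb0 hb hS hXb
  obtain ⟨K, hK0, hKC, hKX⟩ := exists_nat_two_mul_rpow_le_rpow_sub_one hX ht
  have hhead : 1 / 2 ≤ ∑ k ∈ Icc 1 K, b k ^ t := by
    have hsplit := sum_Icc_le_sum_Icc_add_sum_filter_lt (fun k => Real.rpow_nonneg (hb0 k) t) n K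
    have htail := sum_filter_lt_rpow_le hb0 hb hK0 hXb ht.le
    have : X ^ t / (K : ℝ) ^ (t - 1) ≤ 1 / 2 := by
      rw [div_le_iff₀ (by positivity)]
      linarith
    linarith
  by_contra! hcon
  have hsmall := sum_Icc_rpow_le_of_sum_Icc_le hb0 hb (by positivity) (by positivity) (K := K)
    fun k hk => (hcon k (mem_Icc.mp hk).1 ((Nat.cast_le.mpr (mem_Icc.mp hk).2).trans hKC)).le
  have hZK : ∑ k ∈ Icc 1 K, (k : ℝ) ^ ((γ - 1) * t) ≤ Z :=
    hsum.sum_le_tsum _ fun k _ => Real.rpow_nonneg k.cast_nonneg _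
  have hc : ((4 * Z)⁻¹ ^ (1 / t)) ^ t = (4 * Z)⁻¹ := by
    rw [← Real.rpow_mul (by positivity), one_div_mul_cancel (by linarith), Real.rpow_one]
  have : ∑ k ∈ Icc 1 K, b k ^ t ≤ 1 / 4 := calc
    _ ≤ (4 * Z)⁻¹ * ∑ k ∈ Icc 1 K, (k : ℝ) ^ ((γ - 1) * t) := hc ▸ hsmall
    _ ≤ (4 * Z)⁻¹ * Z := by gcongr
    _ = 1 / 4 := by field_simp
  linarith

/-- Energy pigeonholing lemma. -/
theorem energy_pigeonholing (r s : ℝ) (hr : 0 < r) (hrs : r < s) :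
    ∃ C c : ℝ, 0 < C ∧ 0 < c ∧
      ∀ (X : ℝ), 1 ≤ X →
      ∀ (n : ℕ) (a : ℕ → ℝ),
        (∀ k, 0 ≤ a k) →
        (∀ j k, 1 ≤ j → j ≤ k → a k ≤ a j) →
        (∀ k, n < k → a k = 0) →
        1 ≤ ∑ k ∈ Finset.Icc 1 n, a k ^ s →
        ∑ k ∈ Finset.Icc 1 n, a k ^ r ≤ X →
        ∃ R : ℕ, 1 ≤ R ∧ (R : ℝ) ≤ C * X ^ (s / (s - r)) ∧
          c * (R : ℝ) ^ ((s - r) / (2 * s)) ≤ ∑ k ∈ Finset.Icc 1 R, a k ^ r := by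
  obtain ⟨C, c, hC, hc, h⟩ :=
    exists_sum_Icc_ge_rpow_of_one_le_sum_rpow ((one_lt_div hr).mpr hrs)
  refine ⟨C, c, hC, hc, fun X hX n a ha hanti _ hS hXa => ?_⟩
  have hpow : ∀ k, (a k ^ r) ^ (s / r) = a k ^ s := fun k => by
    rw [← Real.rpow_mul (ha k), mul_div_cancel₀ _ hr.ne']
  obtain ⟨R, hR1, hRC, hRc⟩ := h X hX n (a · ^ r) (fun k => Real.rpow_nonneg (ha k) r)
    (fun j hj k _ hjk => Real.rpow_le_rpow (ha k) (hanti j k hj hjk) hr.le)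
    (by simpa only [hpow] using hS) hXa
  refine ⟨R, hR1, ?_, ?_⟩
  · convert hRC using 3
    field_simp
  · convert hRc using 3
    field_simp
end

section
/- Let M ≥ 1 be an integer and p ≥ 1. There is a constant C(p) such that for every function f : ℤ → ℂ supported on {1,…,M}, one has ∑_{r ∈ ℤ/Mℤ} |f̂(r/M)|^p ≤ C(p) · M · ∫_{𝕋} |f̂(θ)|^p dθ, where f̂(θ) = ∑_{n ∈ ℤ} f(n) e(nθ). -/
open scoped BigOperators

/-- The Fourier transform f̂(θ) = ∑_{n ∈ ℤ} f(n) e(nθ). -/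
noncomputable def fourierZ (f : ℤ → ℂ) (θ : ℝ) : ℂ :=
  ∑' n : ℤ, f n * Complex.exp (2 * Real.pi * Complex.I * n * θ)

/-!
On the support `[1, M]`, `f̂` is the trigonometric polynomial `P = ∑_{n=1}^{M} f(n) e(n·)`. The
kernel `K = D_{[1,M]} · D_{[1-M,M-1]}`, a product of two Dirichlet sums, has Fourier coefficient `M`
at every frequency of `P`, and all the frequencies in play differ by less than `2M`; so `P` is
recovered from its samples on any shifted grid of mesh `1/(2M)`:
`2M² P(x) = ∑_{s<2M} P(θ + s/2M) K(x - θ - s/2M)`.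
Since `|D_A D_B| ≤ (|D_A|² + |D_B|²)/2`, discrete Parseval bounds the sum of `|K|` over such a grid
by `3M²`, and the points `r/M` lie on one. Schur's test (via Hölder) then gives
`∑_r |P(r/M)|^p ≤ (3/2)^p ∑_s |P(θ + s/2M)|^p` for every `θ`, and averaging over `θ ∈ [0, 1]` turns
the right-hand side into `2M (3/2)^p ∫ |P|^p`.
-/

open Finset Complex ComplexConjugate

theorem sum_rpow_le_of_le_sum_mul {ι κ : Type*} {s : Finset ι} {t : Finset κ} {p A B : ℝ}
    (hp : 1 ≤ p) {w : ι → κ → ℝ} {a : κ → ℝ} {x : ι → ℝ} (hw : ∀ i j, 0 ≤ w i j)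
    (ha : ∀ j, 0 ≤ a j) (hx : ∀ i, 0 ≤ x i) (hA : 0 ≤ A)
    (hrow : ∀ i ∈ s, ∑ j ∈ t, w i j ≤ A) (hcol : ∀ j ∈ t, ∑ i ∈ s, w i j ≤ B)
    (hxw : ∀ i ∈ s, x i ≤ ∑ j ∈ t, w i j * a j) :
    ∑ i ∈ s, x i ^ p ≤ A ^ (p - 1) * B * ∑ j ∈ t, a j ^ p := by
  have hp0 : 0 < p := by linarith
  have hpoint : ∀ i ∈ s, x i ^ p ≤ A ^ (p - 1) * ∑ j ∈ t, w i j * a j ^ p := by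
    intro i hi
    have hW : 0 ≤ ∑ j ∈ t, w i j := sum_nonneg fun j _ => hw i j
    have hWa : 0 ≤ ∑ j ∈ t, w i j * a j ^ p :=
      sum_nonneg fun j _ => mul_nonneg (hw i j) (Real.rpow_nonneg (ha j) p)
    calc x i ^ p ≤ ((∑ j ∈ t, w i j) ^ (1 - p⁻¹) * (∑ j ∈ t, w i j * a j ^ p) ^ p⁻¹) ^ p :=
          Real.rpow_le_rpow (hx i) ((hxw i hi).trans
            (Real.inner_le_weight_mul_Lp_of_nonneg t hp _ _ (hw i) ha)) hp0.le
      _ = (∑ j ∈ t, w i j) ^ (p - 1) * ∑ j ∈ t, w i j * a j ^ p := by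
          rw [Real.mul_rpow (by positivity) (by positivity), ← Real.rpow_mul hW,
            ← Real.rpow_mul hWa, inv_mul_cancel₀ hp0.ne', Real.rpow_one, sub_mul, one_mul,
            inv_mul_cancel₀ hp0.ne']
      _ ≤ A ^ (p - 1) * ∑ j ∈ t, w i j * a j ^ p := by
          gcongr
          exact hrow i hi
  calc ∑ i ∈ s, x i ^ p ≤ ∑ i ∈ s, A ^ (p - 1) * ∑ j ∈ t, w i j * a j ^ p := sum_le_sum hpoint
    _ = A ^ (p - 1) * ∑ j ∈ t, (∑ i ∈ s, w i j) * a j ^ p := by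
        rw [← mul_sum, sum_comm]; simp only [sum_mul]
    _ ≤ A ^ (p - 1) * ∑ j ∈ t, B * a j ^ p := by
        gcongr with j hj
        · exact Real.rpow_nonneg (ha j) p
        · exact hcol j hj
    _ = A ^ (p - 1) * B * ∑ j ∈ t, a j ^ p := by rw [← mul_sum, mul_assoc]

theorem Function.Periodic.intervalIntegral_sum_comp_add {E : Type*} [NormedAddCommGroup E]
    [NormedSpace ℝ E] {G : ℝ → E} {T : ℝ} (hper : Function.Periodic G T) (hG : Continuous G)
    {ι : Type*} (s : Finset ι) (τ : ι → ℝ) :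
    ∫ θ in (0 : ℝ)..T, ∑ i ∈ s, G (θ + τ i) = #s • ∫ θ in (0 : ℝ)..T, G θ := by
  rw [intervalIntegral.integral_finsetSum fun i _ =>
    (by fun_prop : Continuous fun θ => G (θ + τ i)).intervalIntegrable _ _, ← sum_const]
  refine sum_congr rfl fun i _ => ?_
  rw [intervalIntegral.integral_comp_add_right, zero_add, add_comm,
    hper.intervalIntegral_add_eq (τ i) 0, zero_add]

namespace MarcinkiewiczZygmund

noncomputable def e (x : ℝ) : ℂ := exp (2 * Real.pi * I * x)

lemma e_add (x y : ℝ) : e (x + y) = e x * e y := by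
  rw [e, e, e, ← exp_add]; congr 1; push_cast; ring

lemma e_neg (x : ℝ) : e (-x) = conj (e x) := by
  rw [e, e, ← exp_conj]; congr 1
  simp only [map_mul, map_ofNat, conj_ofReal, conj_I]; push_cast; ring

lemma e_intCast (n : ℤ) : e n = 1 := by
  rw [e, ← exp_int_mul_two_pi_mul_I n]; congr 1; push_cast; ring

lemma e_zero : e 0 = 1 := by simpa using e_intCast 0

@[fun_prop]
lemma continuous_e : Continuous e := by
  unfold e; fun_prop

lemma sum_range_e_mul_div {N : ℕ} (hN : N ≠ 0) (k : ℤ) :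
    ∑ s ∈ range N, e (k * s / N) = if (N : ℤ) ∣ k then (N : ℂ) else 0 := by
  set ζ := exp (2 * Real.pi * I / N)
  have hζ : IsPrimitiveRoot ζ N := isPrimitiveRoot_exp N hN
  have hpow : ∀ s : ℕ, e (k * s / N) = (ζ ^ k) ^ s := by
    intro s
    rw [e, ← exp_int_mul, ← exp_nat_mul]; congr 1; push_cast; ring
  simp_rw [hpow]
  split_ifs with hk
  · simp [(hζ.zpow_eq_one_iff_dvd k).2 hk]
  · have hne : ζ ^ k ≠ 1 := fun h => hk ((hζ.zpow_eq_one_iff_dvd k).1 h)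
    have hN1 : (ζ ^ k) ^ N = 1 := by
      rw [← zpow_natCast, ← zpow_mul, mul_comm, zpow_mul, zpow_natCast, hζ.pow_eq_one, one_zpow]
    rw [geom_sum_eq hne, hN1, sub_self, zero_div]

lemma sum_range_e_grid {N : ℕ} {k : ℤ} (hk : |k| < N) (θ : ℝ) :
    ∑ s ∈ range N, e (k * (θ + s / N)) = if k = 0 then (N : ℂ) else 0 := by
  have hN : N ≠ 0 := by rintro rfl; exact (abs_nonneg k).not_gt (by exact_mod_cast hk)
  have hsplit : ∀ s : ℕ, e (k * (θ + s / N)) = e (k * θ) * e (k * s / N) := by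
    intro s; rw [← e_add]; congr 1; ring
  simp_rw [hsplit, ← mul_sum, sum_range_e_mul_div hN]
  by_cases hk0 : k = 0
  · simp [hk0, e_zero]
  · have : ¬ (N : ℤ) ∣ k := fun h => hk0 (Int.eq_zero_of_abs_lt_dvd h hk)
    simp [hk0, this]

noncomputable def dirichletSum (a b : ℤ) (u : ℝ) : ℂ := ∑ j ∈ Icc a b, e (j * u)

lemma dirichletSum_neg (a b : ℤ) (u : ℝ) :
    dirichletSum a b (-u) = conj (dirichletSum a b u) := by
  simp only [dirichletSum, map_sum, ← e_neg, mul_neg]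

lemma sum_range_norm_sq_dirichletSum {N : ℕ} {a b : ℤ} (hab : b - a < N) (y : ℝ) :
    ∑ s ∈ range N, ‖dirichletSum a b (y + s / N)‖ ^ 2 = N * #(Icc a b) := by
  apply ofReal_injective
  push_cast
  have hdiff : ∀ j ∈ Icc a b, ∀ k ∈ Icc a b, |j - k| < N := by
    intro j hj k hk
    rw [mem_Icc] at hj hk
    rw [abs_lt]; constructor <;> omega
  calc ∑ s ∈ range N, (‖dirichletSum a b (y + s / N)‖ : ℂ) ^ 2
      = ∑ s ∈ range N, ∑ j ∈ Icc a b, ∑ k ∈ Icc a b, e ((j - k : ℤ) * (y + s / N)) := by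
        refine sum_congr rfl fun s _ => ?_
        rw [← mul_conj', ← dirichletSum_neg, dirichletSum, dirichletSum, sum_mul_sum]
        refine sum_congr rfl fun j _ => sum_congr rfl fun k _ => ?_
        rw [← e_add]; congr 1; push_cast; ring
    _ = ∑ j ∈ Icc a b, ∑ k ∈ Icc a b, if j - k = 0 then (N : ℂ) else 0 := by
        rw [sum_comm]
        refine sum_congr rfl fun j hj => ?_
        rw [sum_comm]
        exact sum_congr rfl fun k hk => sum_range_e_grid (hdiff j hj k hk) y
    _ = N * #(Icc a b) := by
        simp only [sub_eq_zero, sum_ite_eq]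
        rw [sum_ite_of_true fun j hj => hj, sum_const, nsmul_eq_mul, mul_comm]

noncomputable def reproducingKernel (M : ℕ) (u : ℝ) : ℂ :=
  dirichletSum 1 M u * dirichletSum (1 - M) (M - 1) u

lemma norm_reproducingKernel_neg (M : ℕ) (u : ℝ) :
    ‖reproducingKernel M (-u)‖ = ‖reproducingKernel M u‖ := by
  simp only [reproducingKernel, dirichletSum_neg, norm_mul, RCLike.norm_conj]

lemma sum_range_norm_reproducingKernel_le (M : ℕ) (y : ℝ) :
    ∑ s ∈ range (2 * M), ‖reproducingKernel M (y + s / (2 * M))‖ ≤ 3 * M ^ 2 := by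
  have hgrid : ∀ a b : ℤ, b - a < ((2 * M : ℕ) : ℤ) →
      ∑ s ∈ range (2 * M), ‖dirichletSum a b (y + s / (2 * M))‖ ^ 2 = 2 * M * #(Icc a b) := by
    intro a b hab
    simpa using sum_range_norm_sq_dirichletSum hab y
  have hcard : (#(Icc (1 - M : ℤ) (M - 1)) : ℝ) ≤ 2 * M := by
    rw [Int.card_Icc]; exact_mod_cast (by omega : (M - 1 + 1 - (1 - M) : ℤ).toNat ≤ 2 * M)
  calc ∑ s ∈ range (2 * M), ‖reproducingKernel M (y + s / (2 * M))‖
      ≤ ∑ s ∈ range (2 * M), (‖dirichletSum 1 M (y + s / (2 * M))‖ ^ 2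
          + ‖dirichletSum (1 - M) (M - 1) (y + s / (2 * M))‖ ^ 2) / 2 := by
        refine sum_le_sum fun s _ => ?_
        rw [reproducingKernel, norm_mul]
        nlinarith [two_mul_le_add_sq ‖dirichletSum 1 M (y + s / (2 * M))‖
          ‖dirichletSum (1 - M) (M - 1) (y + s / (2 * M))‖]
    _ = (2 * M * #(Icc (1 : ℤ) M) + 2 * M * #(Icc (1 - M : ℤ) (M - 1))) / 2 := by
        rw [← sum_div, sum_add_distrib, hgrid _ _ (by omega), hgrid _ _ (by omega)]
    _ ≤ 3 * M ^ 2 := by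
        rw [Int.card_Icc, add_sub_cancel_right, Int.toNat_natCast]
        nlinarith

noncomputable def trigPoly (M : ℕ) (c : ℤ → ℂ) (x : ℝ) : ℂ :=
  ∑ n ∈ Icc (1 : ℤ) M, c n * e (n * x)

lemma continuous_trigPoly (M : ℕ) (c : ℤ → ℂ) : Continuous (trigPoly M c) := by
  unfold trigPoly; fun_prop

lemma trigPoly_periodic (M : ℕ) (c : ℤ → ℂ) : Function.Periodic (trigPoly M c) 1 := by
  intro x
  refine sum_congr rfl fun n _ => ?_
  rw [mul_add, mul_one, e_add, e_intCast, mul_one]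

lemma fourierZ_eq_trigPoly {M : ℕ} {f : ℤ → ℂ} (hf : ∀ n ∉ Icc (1 : ℤ) M, f n = 0) :
    fourierZ f = trigPoly M f := by
  ext θ
  rw [fourierZ, tsum_eq_sum fun n hn => by rw [hf n hn, zero_mul]]
  refine sum_congr rfl fun n _ => ?_
  rw [e]; congr 2; push_cast; ring

lemma sum_range_trigPoly_mul_reproducingKernel (M : ℕ) (c : ℤ → ℂ) (x θ : ℝ) :
    ∑ s ∈ range (2 * M), trigPoly M c (θ + s / (2 * M)) *
        reproducingKernel M (x - (θ + s / (2 * M))) = 2 * M ^ 2 * trigPoly M c x := by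
  set I := Icc (1 : ℤ) M
  set J := Icc (1 - M : ℤ) (M - 1)
  have hterm : ∀ t : ℝ, trigPoly M c t * reproducingKernel M (x - t) =
      ∑ n ∈ I, ∑ i ∈ I, ∑ j ∈ J, c n * e ((i + j : ℤ) * x) * e ((n - i - j : ℤ) * t) := by
    intro t
    rw [trigPoly, reproducingKernel, dirichletSum, dirichletSum, sum_mul_sum, sum_mul]
    refine sum_congr rfl fun n _ => ?_
    rw [mul_sum]
    refine sum_congr rfl fun i _ => ?_
    rw [mul_sum]
    refine sum_congr rfl fun j _ => ?_
    rw [mul_assoc, mul_assoc, ← e_add, ← e_add, ← e_add]; congr 2; push_cast; ring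
  have horth : ∀ n ∈ I, ∀ i ∈ I, ∀ j ∈ J, ∑ s ∈ range (2 * M),
      e ((n - i - j : ℤ) * (θ + s / (2 * M))) = if j = n - i then (2 * M : ℂ) else 0 := by
    intro n hn i hi j hj
    rw [mem_Icc] at hn hi hj
    have h := sum_range_e_grid (N := 2 * M) (k := n - i - j)
      (by rw [abs_lt]; push_cast; constructor <;> omega) θ
    simp only [Nat.cast_mul, Nat.cast_ofNat] at h
    rw [h]
    congr 1; exact propext ⟨fun h => by omega, fun h => by omega⟩
  calc ∑ s ∈ range (2 * M), trigPoly M c (θ + s / (2 * M)) *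
        reproducingKernel M (x - (θ + s / (2 * M)))
      = ∑ n ∈ I, ∑ i ∈ I, ∑ j ∈ J, c n * e ((i + j : ℤ) * x) *
          ∑ s ∈ range (2 * M), e ((n - i - j : ℤ) * (θ + s / (2 * M))) := by
        simp only [hterm, mul_sum]
        rw [sum_comm]
        refine sum_congr rfl fun n _ => ?_
        rw [sum_comm]
        exact sum_congr rfl fun i _ => sum_comm
    _ = ∑ n ∈ I, ∑ i ∈ I, (2 * M : ℂ) * (c n * e (n * x)) := by
        refine sum_congr rfl fun n hn => sum_congr rfl fun i hi => ?_
        rw [sum_congr rfl fun j hj => by rw [horth n hn i hi j hj, mul_ite, mul_zero],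
          sum_ite_eq', if_pos]
        · rw [add_sub_cancel]; ring
        · rw [mem_Icc] at hn hi ⊢; omega
    _ = 2 * M ^ 2 * trigPoly M c x := by
        rw [trigPoly, mul_sum]
        refine sum_congr rfl fun n _ => ?_
        rw [sum_const, Int.card_Icc, add_sub_cancel_right, Int.toNat_natCast, nsmul_eq_mul]
        ring

lemma norm_trigPoly_le {M : ℕ} (hM : M ≠ 0) (c : ℤ → ℂ) (x θ : ℝ) :
    ‖trigPoly M c x‖ ≤ ∑ s ∈ range (2 * M), ‖reproducingKernel M (x - (θ + s / (2 * M)))‖ /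
      (2 * M ^ 2) * ‖trigPoly M c (θ + s / (2 * M))‖ := by
  have hM' : (0 : ℝ) < 2 * M ^ 2 := by positivity
  calc ‖trigPoly M c x‖
      = ‖∑ s ∈ range (2 * M), trigPoly M c (θ + s / (2 * M)) *
          reproducingKernel M (x - (θ + s / (2 * M)))‖ / (2 * M ^ 2) := by
        rw [sum_range_trigPoly_mul_reproducingKernel, norm_mul,
          show ‖(2 * M ^ 2 : ℂ)‖ = 2 * M ^ 2 by norm_cast, mul_div_cancel_left₀ _ hM'.ne']
    _ ≤ (∑ s ∈ range (2 * M), ‖reproducingKernel M (x - (θ + s / (2 * M)))‖ *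
          ‖trigPoly M c (θ + s / (2 * M))‖) / (2 * M ^ 2) := by
        gcongr
        refine (norm_sum_le _ _).trans (le_of_eq (sum_congr rfl fun s _ => ?_))
        rw [norm_mul, mul_comm]
    _ = _ := by rw [sum_div]; simp only [div_mul_eq_mul_div]

lemma sum_norm_trigPoly_rpow_le {M : ℕ} (hM : M ≠ 0) {p : ℝ} (hp : 1 ≤ p) (c : ℤ → ℂ) (θ : ℝ) :
    ∑ r ∈ range M, ‖trigPoly M c (r / M)‖ ^ p ≤
      (3 / 2) ^ p * ∑ s ∈ range (2 * M), ‖trigPoly M c (θ + s / (2 * M))‖ ^ p := by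
  have hM' : (0 : ℝ) < 2 * M ^ 2 := by positivity
  have hrow : ∀ r ∈ range M, ∑ s ∈ range (2 * M),
      ‖reproducingKernel M (r / M - (θ + s / (2 * M)))‖ / (2 * M ^ 2) ≤ 3 / 2 := by
    intro r _
    rw [← sum_div, div_le_iff₀ hM']
    calc ∑ s ∈ range (2 * M), ‖reproducingKernel M (r / M - (θ + s / (2 * M)))‖
        = ∑ s ∈ range (2 * M), ‖reproducingKernel M ((θ - r / M) + s / (2 * M))‖ := by
          refine sum_congr rfl fun s _ => ?_
          rw [← norm_reproducingKernel_neg]; congr 2; ring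
      _ ≤ 3 / 2 * (2 * M ^ 2) := by
          linarith [sum_range_norm_reproducingKernel_le M (θ - r / M)]
  have hcol : ∀ s ∈ range (2 * M), ∑ r ∈ range M,
      ‖reproducingKernel M (r / M - (θ + s / (2 * M)))‖ / (2 * M ^ 2) ≤ 3 / 2 := by
    intro s _
    set g : ℕ → ℝ := fun k => ‖reproducingKernel M (-(θ + s / (2 * M)) + k / (2 * M))‖
    rw [← sum_div, div_le_iff₀ hM']
    calc ∑ r ∈ range M, ‖reproducingKernel M (r / M - (θ + s / (2 * M)))‖
        = ∑ k ∈ (range M).image (2 * ·), g k := by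
          rw [sum_image fun _ _ _ _ h => by simpa using h]
          refine sum_congr rfl fun r _ => ?_
          simp only [g]; congr 2; push_cast; field_simp; ring
      _ ≤ ∑ k ∈ range (2 * M), g k :=
          sum_le_sum_of_subset_of_nonneg
            (image_subset_iff.2 fun r hr => by rw [mem_range] at hr ⊢; omega)
            fun _ _ _ => norm_nonneg _
      _ ≤ 3 / 2 * (2 * M ^ 2) := by
          linarith [sum_range_norm_reproducingKernel_le M (-(θ + s / (2 * M)))]
  have h := sum_rpow_le_of_le_sum_mul hp (fun _ _ => by positivity) (fun _ => norm_nonneg _)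
    (fun _ => norm_nonneg _) (by norm_num) hrow hcol fun r _ => norm_trigPoly_le hM c (r / M) θ
  rwa [Real.rpow_sub_one (by norm_num), div_mul_cancel₀ _ (by norm_num)] at h

end MarcinkiewiczZygmund

open MarcinkiewiczZygmund

/-- One-dimensional Marcinkiewicz–Zygmund discretization lemma. -/
theorem marcinkiewicz_zygmund (p : ℝ) (hp : 1 ≤ p) :
    ∃ C : ℝ, 0 < C ∧ ∀ (M : ℕ), 1 ≤ M → ∀ f : ℤ → ℂ,
      (∀ n : ℤ, n ∉ Finset.Icc (1 : ℤ) M → f n = 0) →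
      ∑ r ∈ Finset.range M, ‖fourierZ f ((r : ℝ) / M)‖ ^ p ≤
        C * M * ∫ θ in (0:ℝ)..1, ‖fourierZ f θ‖ ^ p := by
  refine ⟨2 * (3 / 2) ^ p, by positivity, fun M hM f hf => ?_⟩
  rw [fourierZ_eq_trigPoly hf]
  set G : ℝ → ℝ := fun θ => ‖trigPoly M f θ‖ ^ p
  have hG : Continuous G :=
    (continuous_trigPoly M f).norm.rpow_const fun _ => Or.inr (by linarith)
  have hGper : Function.Periodic G 1 := fun θ => by simp only [G, trigPoly_periodic M f θ]
  calc ∑ r ∈ range M, G (r / M)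
      = ∫ _ in (0 : ℝ)..1, ∑ r ∈ range M, G (r / M) := by simp
    _ ≤ ∫ θ in (0 : ℝ)..1, (3 / 2) ^ p * ∑ s ∈ range (2 * M), G (θ + s / (2 * M)) :=
        intervalIntegral.integral_mono_on zero_le_one intervalIntegrable_const
          ((by fun_prop : Continuous fun θ =>
            (3 / 2) ^ p * ∑ s ∈ range (2 * M), G (θ + s / (2 * M))).intervalIntegrable _ _)
          fun θ _ => sum_norm_trigPoly_rpow_le (by omega) hp f θ
    _ = 2 * (3 / 2) ^ p * M * ∫ θ in (0 : ℝ)..1, G θ := by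
        rw [intervalIntegral.integral_const_mul, hGper.intervalIntegral_sum_comp_add hG,
          card_range, nsmul_eq_mul]
        push_cast; ring
end
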